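/- arXiv:2003.08113 — 8 statements merged into one kernel-verified Lean document; each statement's English description precedes it below -/
import Mathlib

section
/- Let T be a small category with finite products, let AlgT be the category of T-algebras, Y : T^op ⥤ AlgT the restricted coYoneda embedding, and C a cocomplete category. If F : T^op ⥤ C preserves finite coproducts, then the assignment C ↦ (t ↦ Hom_C(F t, C)) defines a functor R_F : C ⥤ AlgT (each functor t ↦ Hom_C(F t, C) preserves finite products), and the left Kan extension Lan_Y F : AlgT ⥤ C is left adjoint to R_F. -/
universe u u₂

open CategoryTheory Limits Opposite

/-- The category of `T`-algebras: the full subcategory of `T ⥤ Type u` consisting of the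
finite-product-preserving functors. -/
abbrev AlgCatT (T : Type u) [SmallCategory T] :=
  ObjectProperty.FullSubcategory (fun F : T ⥤ Type u => PreservesFiniteProducts F)

/-- The restricted coYoneda embedding `Tᵒᵖ ⥤ AlgCat T`, sending `t` to `Hom_T(t, -)`. -/
noncomputable def coYon (T : Type u) [SmallCategory T] : Tᵒᵖ ⥤ AlgCatT T :=
  ObjectProperty.lift _ coyoneda (fun _ => inferInstance)

/-!
A morphism `Y t ⟶ G` out of a corepresentable is, by Yoneda, an element of `G t`, so the pointwise
left Kan extension `(Lan_Y F) G = colim_{Y t ⟶ G} F t` is a colimit over the category of elements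
of `G`. A cocone over it with vertex `c` is a family of maps `G t → (F t ⟶ c)` natural in `t`,
that is, a morphism `G ⟶ R_F c`; this is the hom-set bijection of the adjunction. Each
`Hom_C (F -, c)` preserves finite products because `F` turns finite products of `T` into
coproducts.
-/

namespace CategoryTheory.Copresheaf

variable {T : Type u} [SmallCategory T] {C : Type u₂} [Category.{u} C]

abbrev restrictedYoneda (F : Tᵒᵖ ⥤ C) : C ⥤ T ⥤ Type u :=
  yoneda ⋙ (Functor.whiskeringLeft T Cᵒᵖ (Type u)).obj F.rightOp

lemma map_comp_coyonedaEquiv (F : Tᵒᵖ ⥤ C) {E : C} {t t' : T} (f : t' ⟶ t)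
    (g : coyoneda.obj (op t') ⟶ (restrictedYoneda F).obj E) :
    F.map f.op ≫ coyonedaEquiv g = coyonedaEquiv (coyoneda.map f.op ≫ g) := by
  rw [← coyonedaEquiv_naturality]
  rfl

section

variable (P : ObjectProperty (T ⥤ Type u)) (hP : ∀ t, P (coyoneda.obj t)) (F : Tᵒᵖ ⥤ C)

def liftCoyonedaEquiv {t : T} {G : P.FullSubcategory} :
    ((P.lift coyoneda hP).obj (op t) ⟶ G) ≃ G.obj.obj t :=
  P.fullyFaithfulι.homEquiv.trans coyonedaEquiv

lemma liftCoyonedaEquiv_symm_map {t t' : T} {G : P.FullSubcategory} (f : t ⟶ t')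
    (x : G.obj.obj t) :
    (liftCoyonedaEquiv P hP).symm (G.obj.map f x) =
      (P.lift coyoneda hP).map f.op ≫ (liftCoyonedaEquiv P hP).symm x :=
  P.hom_ext (coyonedaEquiv_symm_map f x)

lemma liftCoyonedaEquiv_symm_comp {t : T} {G G' : P.FullSubcategory} (x : G.obj.obj t)
    (f : G ⟶ G') :
    (liftCoyonedaEquiv P hP).symm x ≫ f = (liftCoyonedaEquiv P hP).symm (f.hom.app t x) :=
  (liftCoyonedaEquiv P hP).eq_symm_apply.mpr <| (coyonedaEquiv_comp _ f.hom).trans <|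
    congrArg (f.hom.app t) ((liftCoyonedaEquiv P hP).apply_symm_apply x)

def coconeHomEquiv (G : P.FullSubcategory) (E : C) :
    (CostructuredArrow.proj (P.lift coyoneda hP) G ⋙ F ⟶
      (Functor.const (CostructuredArrow (P.lift coyoneda hP) G)).obj E) ≃
      (G.obj ⟶ (restrictedYoneda F).obj E) where
  toFun f :=
    { app t := TypeCat.ofHom fun x ↦
        f.app (CostructuredArrow.mk ((liftCoyonedaEquiv P hP).symm x))
      naturality t t' φ := by
        ext x
        let ψ := CostructuredArrow.homMk (S := P.lift coyoneda hP) (T := G)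
          (f := CostructuredArrow.mk ((liftCoyonedaEquiv P hP).symm (G.obj.map φ x)))
          (f' := CostructuredArrow.mk ((liftCoyonedaEquiv P hP).symm x)) φ.op
          (liftCoyonedaEquiv_symm_map P hP φ x).symm
        exact ((f.naturality ψ).trans (Category.comp_id _)).symm }
  invFun g :=
    { app p := coyonedaEquiv (p.hom.hom ≫ g)
      naturality p p' φ := by
        have hφ : coyoneda.map φ.left ≫ p'.hom.hom = p.hom.hom :=
          congrArg (·.hom) (CostructuredArrow.w φ)
        calc F.map φ.left ≫ coyonedaEquiv (p'.hom.hom ≫ g)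
            = coyonedaEquiv (coyoneda.map φ.left ≫ p'.hom.hom ≫ g) :=
              map_comp_coyonedaEquiv F φ.left.unop _
          _ = coyonedaEquiv (p.hom.hom ≫ g) ≫ 𝟙 E := by
              rw [← hφ, Category.assoc, Category.comp_id] }
  left_inv f := NatTrans.ext <| funext fun p ↦ (coyonedaEquiv_comp _ _).trans <|
    congrArg (fun q ↦ show F.obj p.left ⟶ E from f.app (CostructuredArrow.mk q))
      ((liftCoyonedaEquiv P hP).symm_apply_apply p.hom)
  right_inv g := NatTrans.ext <| funext fun t ↦ ConcreteCategory.hom_ext _ _ fun x ↦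
    (coyonedaEquiv_comp _ g).trans <|
      congrArg (g.app t) ((liftCoyonedaEquiv P hP).apply_symm_apply x)

variable (h : ∀ E, P ((restrictedYoneda F).obj E))
variable [(P.lift coyoneda hP).HasPointwiseLeftKanExtension F]
variable {F} (L : P.FullSubcategory ⥤ C) (α : F ⟶ P.lift coyoneda hP ⋙ L)
  [L.IsLeftKanExtension α]

noncomputable def liftCoyonedaHomEquiv (G : P.FullSubcategory) (E : C) :
    (L.obj G ⟶ E) ≃ (G ⟶ (P.lift (restrictedYoneda F) h).obj E) :=
  (Functor.isPointwiseLeftKanExtensionOfIsLeftKanExtension L α G).homEquiv.trans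
    ((coconeHomEquiv P hP F G E).trans
      (P.fullyFaithfulι.homEquiv (X := G) (Y := (P.lift (restrictedYoneda F) h).obj E)).symm)

lemma liftCoyonedaHomEquiv_apply_hom_app {G : P.FullSubcategory} {E : C} (f : L.obj G ⟶ E)
    (t : T) (x : G.obj.obj t) :
    (liftCoyonedaHomEquiv P hP h L α G E f).hom.app t x =
      α.app (op t) ≫ L.map ((liftCoyonedaEquiv P hP).symm x) ≫ f :=
  Category.assoc _ _ _

lemma liftCoyonedaHomEquiv_naturality_left {G G' : P.FullSubcategory} {E : C} (f : G ⟶ G')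
    (k : L.obj G' ⟶ E) :
    liftCoyonedaHomEquiv P hP h L α G E (L.map f ≫ k) =
      f ≫ liftCoyonedaHomEquiv P hP h L α G' E k := by
  refine P.hom_ext (NatTrans.ext (funext fun t ↦ ConcreteCategory.hom_ext _ _ fun x ↦ ?_))
  simp only [ObjectProperty.FullSubcategory.comp_hom, NatTrans.comp_app,
    ConcreteCategory.comp_apply, liftCoyonedaHomEquiv_apply_hom_app]
  rw [← liftCoyonedaEquiv_symm_comp, L.map_comp_assoc]

lemma liftCoyonedaHomEquiv_naturality_right {G : P.FullSubcategory} {E E' : C}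
    (k : L.obj G ⟶ E) (g : E ⟶ E') :
    liftCoyonedaHomEquiv P hP h L α G E' (k ≫ g) =
      liftCoyonedaHomEquiv P hP h L α G E k ≫ (P.lift (restrictedYoneda F) h).map g := by
  refine P.hom_ext (NatTrans.ext (funext fun t ↦ ConcreteCategory.hom_ext _ _ fun x ↦ ?_))
  change _ = (liftCoyonedaHomEquiv P hP h L α G E k).hom.app t x ≫ g
  simp only [liftCoyonedaHomEquiv_apply_hom_app, Category.assoc]

noncomputable def liftCoyonedaAdjunction : L ⊣ P.lift (restrictedYoneda F) h :=
  Adjunction.mkOfHomEquiv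
    { homEquiv := liftCoyonedaHomEquiv P hP h L α
      homEquiv_naturality_left_symm f k := by
        rw [Equiv.symm_apply_eq, liftCoyonedaHomEquiv_naturality_left, Equiv.apply_symm_apply]
      homEquiv_naturality_right := liftCoyonedaHomEquiv_naturality_right P hP h L α }

end
end CategoryTheory.Copresheaf

theorem stmt_1_general (T : Type u) [SmallCategory T]
    {C : Type u₂} [Category.{u} C] [HasColimits C]
    (F : Tᵒᵖ ⥤ C) [PreservesFiniteCoproducts F] :
    ∃ h : ∀ c : C, PreservesFiniteProducts (F.rightOp ⋙ yoneda.obj c),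
      ∃ (Lan : AlgCatT T ⥤ C) (α : F ⟶ coYon T ⋙ Lan),
        Lan.IsLeftKanExtension α ∧
        Nonempty (Lan ⊣ ObjectProperty.lift _
          (yoneda ⋙ (Functor.whiskeringLeft T Cᵒᵖ (Type u)).obj F.rightOp) h) := by
  have h (c : C) : PreservesFiniteProducts (F.rightOp ⋙ yoneda.obj c) :=
    have := preservesFiniteProducts_rightOp F
    inferInstance
  let P : ObjectProperty (T ⥤ Type u) := fun G ↦ PreservesFiniteProducts G
  -- `coYon T` unfolds to `P.lift coyoneda _`, but instance search does not unfold it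
  let α : F ⟶ P.lift coyoneda (fun _ ↦ inferInstance) ⋙ (coYon T).leftKanExtension F :=
    (coYon T).leftKanExtensionUnit F
  have : ((coYon T).leftKanExtension F).IsLeftKanExtension α :=
    inferInstanceAs (((coYon T).leftKanExtension F).IsLeftKanExtension
      ((coYon T).leftKanExtensionUnit F))
  exact ⟨h, _, α, this, ⟨Copresheaf.liftCoyonedaAdjunction P (fun _ ↦ inferInstance) h _ α⟩⟩

/-- Let `T` be a small category with finite products, `C` a cocomplete
category, and `F : Tᵒᵖ ⥤ C` a finite-coproduct-preserving functor.  Then each functor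
`t ↦ Hom_C (F t, c)` preserves finite products, so that `c ↦ (t ↦ Hom_C (F t, c))` defines a
functor `R_F : C ⥤ AlgCat T`, and the left Kan extension of `F` along the restricted coYoneda
embedding `Y : Tᵒᵖ ⥤ AlgCat T` is left adjoint to `R_F`. -/
theorem stmt_1 (T : Type u) [SmallCategory T] [HasFiniteProducts T]
    {C : Type u₂} [Category.{u} C] [HasColimits C]
    (F : Tᵒᵖ ⥤ C) [PreservesFiniteCoproducts F] :
    ∃ h : ∀ c : C, PreservesFiniteProducts (F.rightOp ⋙ yoneda.obj c),
      ∃ (Lan : AlgCatT T ⥤ C) (α : F ⟶ coYon T ⋙ Lan),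
        Lan.IsLeftKanExtension α ∧
        Nonempty (Lan ⊣ ObjectProperty.lift _
          (yoneda ⋙ (Functor.whiskeringLeft T Cᵒᵖ (Type u)).obj F.rightOp) h) :=
  stmt_1_general T F
end

section
/- Let T be a small category with finite products, AlgT the category of T-algebras, Y : T^op ⥤ AlgT the restricted coYoneda embedding, and C a cocomplete category. Precomposition with Y defines an equivalence of categories from the full subcategory of the functor category AlgT ⥤ C spanned by the functors preserving all small colimits onto the category Coalg(T, C) of internal T-coalgebras in C. -/
universe u u₂

open CategoryTheory Limits Opposite

/-!
`Y = coYon T` is fully faithful, and dense by the Yoneda lemma `Hom(Y t, G) ≅ G t`: every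
algebra is canonically a colimit of corepresentables. Hence a colimit-preserving functor out of
`AlgCatT T` is the left Kan extension of its restriction along `Y`, which makes precomposition
with `Y` fully faithful. The same Yoneda lemma shows that `Y` turns products of `T` into
coproducts of algebras, since algebras preserve finite products. Conversely, for a coalgebra `A`
each `Hom(A -, E)` is an algebra, because `A` turns products of `T` into coproducts, and the
left adjoint of `E ↦ Hom(A -, E)` is a colimit-preserving extension of `A` along `Y`.
-/

namespace CategoryTheory

universe v v₁ v₂ v₃ w w' u₁ u₃

lemma Limits.preservesColimitsOfShape_of_op_comp_yoneda {C : Type u₁} {D : Type u₂}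
    [Category.{v₁} C] [Category.{v₂} D] {J : Type w} [Category.{w'} J] (F : C ⥤ D)
    [∀ Y : D, PreservesLimitsOfShape Jᵒᵖ (F.op ⋙ yoneda.obj Y)] :
    PreservesColimitsOfShape J F :=
  have : PreservesLimitsOfShape Jᵒᵖ F.op := ⟨⟨fun hc =>
    ⟨yonedaJointlyReflectsLimits _ _ fun Y =>
      isLimitOfPreserves (F.op ⋙ yoneda.obj Y) hc⟩⟩⟩
  preservesColimitsOfShape_of_op J F

namespace Functor

lemma whiskerLeft_bijective_of_isDense {C : Type u₁} {D : Type u₂} {E : Type u₃}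
    [Category.{v₁} C] [Category.{v₂} D] [Category.{v₃} E] (F : C ⥤ D) [F.IsDense]
    (L L' : D ⥤ E) [PreservesColimitsOfSize.{v₁, max u₁ v₂} L] :
    Function.Bijective (whiskerLeft F : (L ⟶ L') → (F ⋙ L ⟶ F ⋙ L')) := by
  convert ((𝟭 D ⋙ L).homEquivOfIsLeftKanExtension
    (whiskerRight F.rightUnitor.inv L ≫ (associator _ _ _).hom) L').bijective
  · rfl
  · ext f X
    simp [homEquivOfIsLeftKanExtension]

/-- The extension is the Yoneda extension of `A` precomposed with `d ↦ Hom(F -, d)`; the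
isomorphism `e` restricts the Yoneda adjunction to an adjunction with right adjoint `R`. -/
lemma exists_preservesColimits_extension_of_isDense {C : Type u₁} {D : Type u₂} {E : Type u₃}
    [Category.{v} C] [Category.{v} D] [Category.{v} E] (F : C ⥤ D) [F.IsDense]
    (hF : F.FullyFaithful) [HasColimitsOfSize.{v, max u₁ v} E] (A : C ⥤ E) (R : E ⥤ D)
    (e : R ⋙ Presheaf.restrictedULiftYoneda.{v} F ≅ Presheaf.restrictedULiftYoneda.{v} A) :
    ∃ L : D ⥤ E, PreservesColimits L ∧ Nonempty (F ⋙ L ≅ A) := by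
  let L := Presheaf.restrictedULiftYoneda.{v} F ⋙ uliftYoneda.{v}.leftKanExtension A
  have adj : L ⊣ R := (Presheaf.uliftYonedaAdjunction.{0} _
      (uliftYoneda.leftKanExtensionUnit A)).restrictFullyFaithful
    (FullyFaithful.ofFullyFaithful _) (FullyFaithful.id _) L.rightUnitor.symm e.symm
  exact ⟨L, adj.leftAdjoint_preservesColimits, ⟨(associator _ _ _).symm ≪≫
    isoWhiskerRight hF.compUliftYonedaCompWhiskeringLeft _ ≪≫
    Presheaf.isExtensionAlongULiftYoneda.{0} A⟩⟩

end Functor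

end CategoryTheory

namespace AlgCatT

variable (T : Type u) [SmallCategory T]

instance : (coYon T).Full := inferInstanceAs (ObjectProperty.lift _ coyoneda _).Full

instance : (coYon T).Faithful := inferInstanceAs (ObjectProperty.lift _ coyoneda _).Faithful

noncomputable def coYonOpCompYonedaIso :
    yoneda ⋙ (Functor.whiskeringLeft _ _ _).obj (coYon T).op ≅
      ObjectProperty.ι _ ⋙ (Functor.whiskeringLeft _ _ _).obj (unopUnop T) :=
  NatIso.ofComponents (fun G => NatIso.ofComponents (fun s =>
    Equiv.toIso ((ObjectProperty.fullyFaithfulι _).homEquiv.trans coyonedaEquiv))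
      fun f => by ext x; exact (coyonedaEquiv_naturality x.hom f.unop.unop).symm)
    fun f => by ext s x; exact coyonedaEquiv_comp x.hom f.hom

instance : (coYon T).IsDense :=
  Functor.IsDense.of_fullyFaithful_restrictedULiftYoneda.{u} <|
    (((ObjectProperty.fullyFaithfulι _).comp
      (opOpEquivalence T).symm.congrLeft.fullyFaithfulFunctor).comp
        (fullyFaithfulULiftFunctor.whiskeringRight _)).ofIso
      (Functor.isoWhiskerRight (coYonOpCompYonedaIso T).symm _)

instance : PreservesFiniteCoproducts (coYon T) where
  preserves n :=
    have (G : AlgCatT T) :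
        PreservesLimitsOfShape (Discrete (Fin n))ᵒᵖ ((coYon T).op ⋙ yoneda.obj G) := by
      have := G.property
      have :=
        preservesLimitsOfShape_of_equiv (Discrete.opposite (Fin n)).symm (unopUnop T ⋙ G.obj)
      exact preservesLimitsOfShape_of_natIso (F := unopUnop T ⋙ G.obj)
        ((coYonOpCompYonedaIso T).app G).symm
    preservesColimitsOfShape_of_op_comp_yoneda _

variable {T} {C : Type u₂} [Category.{u} C] (A : Tᵒᵖ ⥤ C) [PreservesFiniteCoproducts A]

noncomputable def restrictedYoneda : C ⥤ AlgCatT T :=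
  ObjectProperty.lift _ (yoneda ⋙ (Functor.whiskeringLeft _ _ _).obj A.rightOp) fun _ =>
    have := preservesFiniteProducts_rightOp A
    inferInstanceAs (PreservesFiniteProducts (A.rightOp ⋙ yoneda.obj _))

noncomputable def restrictedYonedaCompIso :
    restrictedYoneda A ⋙ Presheaf.restrictedULiftYoneda.{u} (coYon T) ≅
      Presheaf.restrictedULiftYoneda.{u} A :=
  Functor.isoWhiskerLeft (restrictedYoneda A)
    (Functor.isoWhiskerRight (coYonOpCompYonedaIso T)
      ((Functor.whiskeringRight _ _ _).obj uliftFunctor.{u}))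

end AlgCatT

theorem stmt_2_general (T : Type u) [SmallCategory T]
    (C : Type u₂) [Category.{u} C] [HasColimits C] :
    ∃ h : ∀ L : ObjectProperty.FullSubcategory (fun L : AlgCatT T ⥤ C => PreservesColimits L),
        PreservesFiniteCoproducts (coYon T ⋙ L.obj),
      (ObjectProperty.lift (fun A : Tᵒᵖ ⥤ C => PreservesFiniteCoproducts A)
        (ObjectProperty.ι _ ⋙
          (Functor.whiskeringLeft Tᵒᵖ (AlgCatT T) C).obj (coYon T)) h).IsEquivalence := by
  have bij (L L' : ObjectProperty.FullSubcategory fun L : AlgCatT T ⥤ C => PreservesColimits L) :=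
    have := L.property
    (coYon T).whiskerLeft_bijective_of_isDense L.obj L'.obj
  refine ⟨fun L => have := L.property; inferInstance,
    { faithful := ⟨fun h => ObjectProperty.hom_ext _ ((bij _ _).1 congr(($h).hom))⟩
      full := ⟨fun p =>
        let ⟨f, hf⟩ := (bij _ _).2 p.hom
        ⟨ObjectProperty.homMk f, ObjectProperty.hom_ext _ hf⟩⟩
      essSurj := ⟨fun A => ?_⟩ }⟩
  have := A.property
  obtain ⟨L, hL, ⟨e⟩⟩ := (coYon T).exists_preservesColimits_extension_of_isDense
    (.ofFullyFaithful _) A.obj (AlgCatT.restrictedYoneda A.obj)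
    (AlgCatT.restrictedYonedaCompIso A.obj)
  exact ⟨⟨L, hL⟩, ⟨ObjectProperty.isoMk _ e⟩⟩

/-- For a small category `T` with finite products and a cocomplete
category `C`, precomposition with the restricted coYoneda embedding `Y : Tᵒᵖ ⥤ AlgCat T`
defines an equivalence from the full subcategory of `AlgCat T ⥤ C` spanned by the functors
preserving all small colimits onto the category `Coalg (T, C)` of internal `T`-coalgebras
in `C`, i.e. the full subcategory of `Tᵒᵖ ⥤ C` of finite-coproduct-preserving functors. -/
theorem stmt_2 (T : Type u) [SmallCategory T] [HasFiniteProducts T]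
    (C : Type u₂) [Category.{u} C] [HasColimits C] :
    ∃ h : ∀ L : ObjectProperty.FullSubcategory (fun L : AlgCatT T ⥤ C => PreservesColimits L),
        PreservesFiniteCoproducts (coYon T ⋙ L.obj),
      (ObjectProperty.lift (fun A : Tᵒᵖ ⥤ C => PreservesFiniteCoproducts A)
        (ObjectProperty.ι _ ⋙
          (Functor.whiskeringLeft Tᵒᵖ (AlgCatT T) C).obj (coYon T)) h).IsEquivalence :=
  stmt_2_general T C
end

section
/- Let T be a small category with finite products, AlgT the category of T-algebras, Y : T^op ⥤ AlgT the restricted coYoneda embedding, and C a cocomplete category. Every functor L : AlgT ⥤ C that preserves all small colimits is naturally isomorphic to the left Kan extension along Y of its restriction Y ⋙ L : T^op ⥤ C. -/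
/-!
Every `T`-algebra `A` is the canonical colimit of the representables `Y t ⟶ A`: this holds for
all copresheaves because `coyoneda` is dense, and density passes to a full subcategory containing
the image. A colimit-preserving `L` carries these canonical colimits to colimits, which says
exactly that `L` is a pointwise left Kan extension of `Y ⋙ L` along `Y`; any other left Kan
extension is then isomorphic to `L`.
-/

universe u u₂

open CategoryTheory Limits Opposite

namespace CategoryTheory.Functor

variable {C D D' E : Type*} [Category* C] [Category* D] [Category* D'] [Category* E]

instance : (coyoneda (C := C)).IsDense :=
  .of_iso Coyoneda.opIso

noncomputable def DenseAt.ofCompFullyFaithful {F : C ⥤ D} (G : D ⥤ D') [G.Full] [G.Faithful]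
    {Y : D} (h : (F ⋙ G).DenseAt (G.obj Y)) : F.DenseAt Y :=
  isColimitOfReflects G <|
    (h.whiskerEquivalence (CostructuredArrow.post F G Y).asEquivalence).ofIsoColimit
      (Cocone.ext (Iso.refl _) (fun _ => by
        simp only [comp_obj, mapCocone_pt, Cocone.whisker_pt, Cocone.whisker_ι, whiskerLeft_app,
          LeftExtension.coconeAt_ι_app, LeftExtension.mk_hom, rightUnitor_inv_app, Iso.refl_hom,
          mapCocone_ι_app]
        erw [Category.id_comp, Category.comp_id, Category.id_comp]
        rfl))

instance IsDense.lift (P : ObjectProperty D) (F : C ⥤ D) (hF : ∀ X, P (F.obj X)) [F.IsDense] :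
    (P.lift F hF).IsDense where
  isDenseAt Y := ⟨.ofCompFullyFaithful P.ι (F.denseAt Y.obj)⟩

noncomputable def isPointwiseLeftKanExtensionOfIsDense (F : C ⥤ D) [F.IsDense] (L : D ⥤ E)
    [∀ Y : D, PreservesColimit (CostructuredArrow.proj F Y ⋙ F) L] :
    (LeftExtension.mk L (𝟙 (F ⋙ L))).IsPointwiseLeftKanExtension := fun Y =>
  (isColimitOfPreserves L (F.denseAt Y)).ofIsoColimit
    (Cocone.ext (Iso.refl _) (fun _ => by
      simp only [comp_obj, mapCocone_pt, mapCocone_ι_app, LeftExtension.coconeAt_ι_app,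
        LeftExtension.mk_hom, rightUnitor_inv_app, Iso.refl_hom, NatTrans.id_app]
      erw [Category.id_comp, Category.comp_id, Category.id_comp]
      rfl))

end CategoryTheory.Functor

theorem stmt_3_general (T : Type u) [SmallCategory T]
    {C : Type u₂} [Category.{u} C]
    (L : AlgCatT T ⥤ C) [PreservesColimits L] :
    Functor.HasLeftKanExtension (coYon T) (coYon T ⋙ L) ∧
    ∀ (Lan : AlgCatT T ⥤ C) (α : coYon T ⋙ L ⟶ coYon T ⋙ Lan),
      Lan.IsLeftKanExtension α → Nonempty (L ≅ Lan) := by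
  have : (coYon T).IsDense := Functor.IsDense.lift _ _ _
  have hL := Functor.isPointwiseLeftKanExtensionOfIsDense (coYon T) L
  have : L.IsLeftKanExtension (𝟙 (coYon T ⋙ L)) := hL.isLeftKanExtension
  exact ⟨hL.hasLeftKanExtension, fun Lan α _ => ⟨Functor.leftKanExtensionUnique L (𝟙 _) Lan α⟩⟩

/-- Let `T` be a small category with finite products, `C` a cocomplete
category, and `Y : Tᵒᵖ ⥤ AlgCatT T` the restricted coYoneda embedding.  Every functor
`L : AlgCatT T ⥤ C` preserving all small colimits is naturally isomorphic to the left Kan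
extension along `Y` of its restriction `Y ⋙ L : Tᵒᵖ ⥤ C`; in particular this left Kan
extension exists. -/
theorem stmt_3 (T : Type u) [SmallCategory T] [HasFiniteProducts T]
    {C : Type u₂} [Category.{u} C] [HasColimits C]
    (L : AlgCatT T ⥤ C) [PreservesColimits L] :
    Functor.HasLeftKanExtension (coYon T) (coYon T ⋙ L) ∧
    ∀ (Lan : AlgCatT T ⥤ C) (α : coYon T ⋙ L ⟶ coYon T ⋙ Lan),
      Lan.IsLeftKanExtension α → Nonempty (L ≅ Lan) :=
  stmt_3_general T L
end

section
/- Let C be a cocomplete category, M a monad on the category of types, and H : C ⥤ M-Alg a functor into the Eilenberg–Moore category of M such that the composite of H with the forgetful functor M-Alg ⥤ Type is corepresentable, i.e. naturally isomorphic to Hom_C(A, −) for some object A of C. Then H has a left adjoint. -/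
universe u u₂

open CategoryTheory Limits Opposite

/- A corepresented functor `Hom_C (A, -)` has the copower `X ↦ ∐_X A` as left adjoint, and a
right adjoint that factors through the monadic forgetful functor of `M.Algebra` lifts along it
(adjoint triangle theorem, using that `C` has coequalizers). -/
/-- Let `C` be a cocomplete category, `M` a monad on the category of types,
and `H : C ⥤ M.Algebra` a functor into the Eilenberg–Moore category of `M` such that the
composite of `H` with the forgetful functor `M.Algebra ⥤ Type` is corepresentable, i.e.
naturally isomorphic to `Hom_C (A, -)` for some object `A` of `C`.  Then `H` has a left
adjoint. -/
theorem stmt_4 {C : Type u₂} [Category.{u} C] [HasColimits C]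
    (M : Monad (Type u)) (H : C ⥤ M.Algebra)
    (h : ∃ A : C, Nonempty (H ⋙ M.forget ≅ coyoneda.obj (op A))) :
    H.IsRightAdjoint := by
  obtain ⟨A, ⟨e⟩⟩ := h
  have : (H ⋙ M.forget).IsRightAdjoint := ((sigmaConstAdj A).ofNatIsoRight e.symm).isRightAdjoint
  exact isRightAdjoint_triangle_lift_monadic M.forget
end

section
/- Let R and S be (not necessarily commutative) rings. The functor that sends a colimit-preserving functor L : ModuleCat R ⥤ ModuleCat S to the left S-module L(R) equipped with the right R-action in which r ∈ R acts as L(ρ_r), where ρ_r : R → R, x ↦ x·r, is the left-R-linear right-multiplication map, defines an equivalence of categories from the full subcategory of the functor category ModuleCat R ⥤ ModuleCat S spanned by the functors preserving all small colimits onto the category of (S,R)-bimodules (generalized Eilenberg–Watts theorem). -/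
/-!
A functor `L` preserving colimits preserves finite biproducts, hence is additive, so `L(R)` is an
`(S,R)`-bimodule. Conversely a bimodule `X` gives the functor `X ⊗_R -` (built as the quotient of
`X ⊗_ℤ N` by the balancing relations), left adjoint to `Hom_S(X, -)` and hence colimit-preserving,
with `X ⊗_R R ≅ X`. The comparison `L(R) ⊗_R N ⟶ L(N)`, `m ⊗ n ↦ L(x ↦ x • n)(m)`, is natural and
is an isomorphism for `N = R`; both sides preserve colimits and every module is the cokernel of a
map between free modules, so it is an isomorphism for every `N`.
-/


universe u

open CategoryTheory Limits

variable (S R : Type u) [Ring S] [Ring R]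

/-- An `(S,R)`-bimodule: a left `S`-module `M` together with a right `R`-action by `S`-linear
endomorphisms, i.e. a ring homomorphism `Rᵐᵒᵖ →+* Module.End S M`. -/
structure BimodObj : Type (u + 1) where
  M : ModuleCat.{u} S
  ρ : Rᵐᵒᵖ →+* Module.End S M

variable {S R}

/-- A homomorphism of `(S,R)`-bimodules: an `S`-linear map commuting with the right
`R`-actions. -/
@[ext]
structure BimodHom (X Y : BimodObj S R) where
  f : X.M ⟶ Y.M
  comm : ∀ (r : Rᵐᵒᵖ) (x : X.M), f (X.ρ r x) = Y.ρ r (f x)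

instance : Category (BimodObj S R) where
  Hom := BimodHom
  id X := { f := 𝟙 X.M, comm := fun r x => rfl }
  comp {X Y Z} u v :=
    { f := u.f ≫ v.f
      comm := fun r x => by
        change v.f (u.f (X.ρ r x)) = Z.ρ r (v.f (u.f x))
        rw [u.comm, v.comm] }
  id_comp u := BimodHom.ext (Category.id_comp u.f)
  comp_id u := BimodHom.ext (Category.comp_id u.f)
  assoc u v w := BimodHom.ext (Category.assoc u.f v.f w.f)

variable (R)

/-- Right multiplication by `r` on `R`, as a morphism of left `R`-modules. -/
def rmulHom (r : R) : ModuleCat.of R R ⟶ ModuleCat.of R R :=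
  ModuleCat.ofHom
    { toFun := fun x => x * r
      map_add' := fun x y => add_mul x y r
      map_smul' := fun m x => by simp [smul_eq_mul, mul_assoc] }

variable (S) {R}

/-- The bimodule `L(R)` associated to an additive functor `L : ModuleCat R ⥤ ModuleCat S`:
the underlying left `S`-module is `L(R)` and `r : R` acts on the right as `L` applied to right
multiplication by `r`. -/
def wattsObj (L : ModuleCat.{u} R ⥤ ModuleCat.{u} S) (h : L.Additive) : BimodObj S R where
  M := L.obj (ModuleCat.of R R)
  ρ :=
    { toFun := fun r => (L.map (rmulHom R r.unop)).hom
      map_one' := by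
        try dsimp only
        have e : rmulHom R ((1 : Rᵐᵒᵖ).unop) = 𝟙 (ModuleCat.of R R) :=
          ModuleCat.hom_ext (LinearMap.ext fun x : R => mul_one x)
        rw [e, L.map_id]; rfl
      map_mul' := fun r r' => by
        try dsimp only
        have e : rmulHom R (r * r').unop = rmulHom R r'.unop ≫ rmulHom R r.unop :=
          ModuleCat.hom_ext (LinearMap.ext fun x : R => (mul_assoc x r'.unop r.unop).symm)
        rw [e, L.map_comp]; rfl
      map_zero' := by
        letI := h
        try dsimp only
        have e : rmulHom R ((0 : Rᵐᵒᵖ).unop) = 0 :=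
          ModuleCat.hom_ext (LinearMap.ext fun x : R => mul_zero x)
        rw [e, L.map_zero, ModuleCat.hom_zero]
      map_add' := fun r r' => by
        letI := h
        try dsimp only
        have e : rmulHom R (r + r').unop = rmulHom R r.unop + rmulHom R r'.unop :=
          ModuleCat.hom_ext (LinearMap.ext fun x : R => mul_add x r.unop r'.unop)
        rw [e, L.map_add, ModuleCat.hom_add] }

/-- The full subcategory of functors `ModuleCat R ⥤ ModuleCat S` preserving all small
colimits. -/
abbrev WattsDom (S R : Type u) [Ring S] [Ring R] :=
  ObjectProperty.FullSubcategory (fun L : ModuleCat.{u} R ⥤ ModuleCat.{u} S => PreservesColimits L)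

/-- The Eilenberg–Watts functor, sending a colimit-preserving functor
`L : ModuleCat R ⥤ ModuleCat S` to the `(S,R)`-bimodule `L(R)`. -/
def wattsFunctor (hadd : ∀ L : WattsDom S R, L.obj.Additive) :
    WattsDom S R ⥤ BimodObj S R where
  obj L := wattsObj S L.obj (hadd L)
  map {L L'} η :=
    { f := η.hom.app (ModuleCat.of R R)
      comm := fun r x => by
        have h := η.hom.naturality (rmulHom R r.unop)
        exact congrArg
          (fun g : L.obj.obj (ModuleCat.of R R) ⟶ L'.obj.obj (ModuleCat.of R R) => g x) h }
  map_id L := BimodHom.ext rfl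
  map_comp u v := BimodHom.ext rfl

variable {S}

open MulOpposite

theorem CategoryTheory.Functor.additive_of_preservesFiniteColimits {C D : Type*} [Category C]
    [Category D] [Preadditive C] [Preadditive D] [HasBinaryBiproducts C] [HasZeroObject C]
    [HasZeroObject D] (F : C ⥤ D) [PreservesFiniteColimits F] : F.Additive := by
  have := preservesBinaryBiproducts_of_preservesBinaryCoproducts F
  exact F.additive_of_preservesBinaryBiproducts

namespace ModuleCat

noncomputable def finsuppCofan (ι : Type u) : Cofan fun _ : ι => ModuleCat.of R R :=
  Cofan.mk (of R (ι →₀ R)) fun i => ofHom (Finsupp.lsingle i)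

noncomputable def isColimitFinsuppCofan (ι : Type u) : IsColimit (finsuppCofan (R := R) ι) :=
  Cofan.IsColimit.mk _ (fun t => ofHom (Finsupp.lsum ℕ fun i => (t.inj i).hom))
    (fun t i => by ext; simp [finsuppCofan])
    (fun t m hm => by
      ext : 1
      refine Finsupp.lhom_ext fun i x => ?_
      exact congr($(hm i) x).trans (Finsupp.lsum_single ℕ (fun i => (t.inj i).hom) i x).symm)

section

variable {C : Type*} [Category C] {F G : ModuleCat.{u} R ⥤ C} (η : F ⟶ G)
  [PreservesColimitsOfSize.{u, u} F] [PreservesColimitsOfSize.{u, u} G] [IsIso (η.app (of R R))]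

theorem isIso_app_finsupp (ι : Type u) : IsIso (η.app (of R (ι →₀ R))) := by
  let K := Discrete.functor fun _ : ι => of R R
  have (i : Discrete ι) : IsIso ((Functor.whiskerLeft K η).app i) := ‹IsIso (η.app (of R R))›
  have := NatIso.isIso_of_isIso_app (Functor.whiskerLeft K η)
  exact isIso_app_coconePt_of_preservesColimit _ η _ (isColimitFinsuppCofan ι)

theorem isIso_of_isIso_app_self : IsIso η := by
  suffices ∀ N, IsIso (η.app N) from NatIso.isIso_of_isIso_app η
  intro N
  have := PreservesColimitsOfSize.preservesFiniteColimits F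
  have := PreservesColimitsOfSize.preservesFiniteColimits G
  let P := Module.Presentation.tautological R N
  have hc := isColimitCokernelCofork (ofHom P.map) (ofHom P.π) P.exact P.surjective_π
  let K := parallelPair (ofHom P.map) 0
  have (j : WalkingParallelPair) : IsIso ((Functor.whiskerLeft K η).app j) := by
    cases j <;> exact isIso_app_finsupp η _
  have := NatIso.isIso_of_isIso_app (Functor.whiskerLeft K η)
  exact isIso_app_coconePt_of_preservesColimit _ η _ hc

end

section

variable {N : ModuleCat.{u} R}

abbrev toSpanSingleton (n : N) : of R R ⟶ N := ofHom (LinearMap.toSpanSingleton R N n)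

lemma rmulHom_comp_toSpanSingleton (r : R) (n : N) :
    rmulHom R r ≫ toSpanSingleton n = toSpanSingleton (r • n) :=
  hom_ext (LinearMap.ext fun x => mul_smul x r n)

lemma toSpanSingleton_comp {N' : ModuleCat.{u} R} (n : N) (g : N ⟶ N') :
    toSpanSingleton n ≫ g = toSpanSingleton (g n) :=
  hom_ext (LinearMap.comp_toSpanSingleton g.hom n)

lemma toSpanSingleton_add (n n' : N) :
    toSpanSingleton (n + n') = toSpanSingleton n + toSpanSingleton n' :=
  hom_ext (LinearMap.toSpanSingleton_add n n')

end

end ModuleCat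

namespace BimodObj

open TensorProduct

variable (X : BimodObj S R) (N : ModuleCat.{u} R)

def tensorRel : Submodule S (X.M ⊗[ℤ] N) :=
  Submodule.span S {z | ∃ (m : X.M) (r : R) (n : N), z = X.ρ (op r) m ⊗ₜ n - m ⊗ₜ (r • n)}

abbrev Tensor : Type u := (X.M ⊗[ℤ] N) ⧸ X.tensorRel N

variable {X N}

def tmul (m : X.M) (n : N) : X.Tensor N := Submodule.Quotient.mk (m ⊗ₜ n)

lemma add_tmul (m m' : X.M) (n : N) : tmul (m + m') n = tmul m n + tmul m' n := by
  simp [tmul, TensorProduct.add_tmul]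

lemma tmul_add (m : X.M) (n n' : N) : tmul m (n + n') = tmul m n + tmul m n' := by
  simp [tmul, TensorProduct.tmul_add]

lemma smul_tmul (s : S) (m : X.M) (n : N) : tmul (s • m) n = s • tmul m n := by
  simp [tmul, ← TensorProduct.smul_tmul']

lemma act_tmul (r : R) (m : X.M) (n : N) : tmul (X.ρ (op r) m) n = tmul m (r • n) :=
  (Submodule.Quotient.eq _).2 (Submodule.subset_span ⟨m, r, n, rfl⟩)

def lift {P : Type*} [AddCommGroup P] [Module S P] (f : X.M → N → P)
    (add_left : ∀ m m' n, f (m + m') n = f m n + f m' n)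
    (smul_left : ∀ (s : S) m n, f (s • m) n = s • f m n)
    (add_right : ∀ m n n', f m (n + n') = f m n + f m n')
    (act_left : ∀ (r : R) m n, f (X.ρ (op r) m) n = f m (r • n)) : X.Tensor N →ₗ[S] P :=
  (X.tensorRel N).liftQ
    (AlgebraTensorModule.lift
      { toFun m := (AddMonoidHom.mk' (f m) (add_right m)).toIntLinearMap
        map_add' m m' := LinearMap.ext (add_left m m')
        map_smul' s m := LinearMap.ext (smul_left s m) })
    (Submodule.span_le.2 <| by rintro _ ⟨m, r, n, rfl⟩; simp [act_left])

variable (X) in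
def tensorFunctor : ModuleCat.{u} R ⥤ ModuleCat.{u} S where
  obj N := ModuleCat.of S (X.Tensor N)
  map {N N'} g := ModuleCat.ofHom <| lift (fun m n => tmul m (g n)) (fun _ _ _ => add_tmul ..)
    (fun _ _ _ => smul_tmul ..) (fun m n n' => by rw [map_add, tmul_add])
    (fun r m n => by rw [map_smul, act_tmul])

lemma Tensor.linearMap_ext {P : Type*} [AddCommGroup P] [Module S P] {f g : X.Tensor N →ₗ[S] P}
    (h : ∀ m n, f (tmul m n) = g (tmul m n)) : f = g :=
  Submodule.linearMap_qext _ (AlgebraTensorModule.ext h)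

@[ext]
lemma Tensor.hom_ext {P : ModuleCat.{u} S} {f g : X.tensorFunctor.obj N ⟶ P}
    (h : ∀ m n, f (tmul m n) = g (tmul m n)) : f = g :=
  ModuleCat.hom_ext (Tensor.linearMap_ext h)

variable (X) in
def HomSpace (P : ModuleCat.{u} S) : Type u := X.M →ₗ[S] P

instance (P : ModuleCat.{u} S) : AddCommGroup (X.HomSpace P) :=
  inferInstanceAs (AddCommGroup (X.M →ₗ[S] P))

variable {P : ModuleCat.{u} S}

instance : FunLike (X.HomSpace P) X.M P := inferInstanceAs (FunLike (X.M →ₗ[S] P) X.M P)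

instance : LinearMapClass (X.HomSpace P) S X.M P :=
  inferInstanceAs (LinearMapClass (X.M →ₗ[S] P) S X.M P)

@[ext]
lemma HomSpace.ext {f g : X.HomSpace P} (h : ∀ m, f m = g m) : f = g :=
  DFunLike.ext f g h

@[simp]
lemma HomSpace.add_apply (f g : X.HomSpace P) (m : X.M) : (f + g) m = f m + g m :=
  rfl

@[simp]
lemma HomSpace.zero_apply (m : X.M) : (0 : X.HomSpace P) m = 0 :=
  rfl

instance : SMul R (X.HomSpace P) :=
  ⟨fun r f => LinearMap.comp (M₃ := P) f (X.ρ (op r))⟩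

@[simp]
lemma HomSpace.smul_apply (r : R) (f : X.HomSpace P) (m : X.M) : (r • f) m = f (X.ρ (op r) m) :=
  rfl

instance : Module R (X.HomSpace P) where
  one_smul f := by ext; simp
  mul_smul r r' f := by ext; simp
  smul_zero r := rfl
  smul_add r f f' := rfl
  add_smul r r' f := by ext; simp
  zero_smul f := by ext; simp

variable (X) in
def homFunctor : ModuleCat.{u} S ⥤ ModuleCat.{u} R where
  obj P := ModuleCat.of R (X.HomSpace P)
  map h := ModuleCat.ofHom
    { toFun f := LinearMap.comp (M₁ := X.M) h.hom f
      map_add' f g := HomSpace.ext fun m => map_add h.hom (f m) (g m)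
      map_smul' _ _ := rfl }

variable (N) in
def tmulRight (n : N) : X.M →ₗ[S] X.Tensor N where
  toFun m := tmul m n
  map_add' m m' := add_tmul m m' n
  map_smul' s m := smul_tmul s m n

variable (X) in
def tensorHomEquiv (N : ModuleCat.{u} R) (P : ModuleCat.{u} S) :
    (X.tensorFunctor.obj N ⟶ P) ≃ (N ⟶ ModuleCat.of R (X.HomSpace P)) where
  toFun φ := ModuleCat.ofHom
    { toFun n := φ.hom ∘ₗ tmulRight N n
      map_add' n n' := HomSpace.ext fun m => by
        change φ (tmul m (n + n')) = φ (tmul m n) + φ (tmul m n')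
        rw [tmul_add]
        exact map_add φ.hom _ _
      map_smul' r n := HomSpace.ext fun m => by
        change φ (tmul m (r • n)) = φ (tmul (X.ρ (op r) m) n)
        rw [act_tmul] }
  invFun ψ := ModuleCat.ofHom <| lift (fun m n => (ψ n : X.HomSpace P) m)
    (fun _ _ _ => map_add _ _ _) (fun _ _ _ => map_smul _ _ _)
    (fun m n n' => by rw [map_add]; rfl) (fun r m n => by rw [map_smul]; rfl)
  left_inv φ := by ext; rfl
  right_inv ψ := by ext; rfl

variable (X) in
def tensorHomAdjunction : X.tensorFunctor ⊣ X.homFunctor :=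
  Adjunction.mkOfHomEquiv
    { homEquiv := X.tensorHomEquiv
      homEquiv_naturality_left_symm _ _ := Tensor.hom_ext fun _ _ => rfl
      homEquiv_naturality_right _ _ := by ext; rfl }

instance : PreservesColimitsOfSize.{u, u} X.tensorFunctor :=
  X.tensorHomAdjunction.leftAdjoint_preservesColimits

variable (X) in
def tensorSelfIso : X.tensorFunctor.obj (ModuleCat.of R R) ≅ X.M where
  hom := ModuleCat.ofHom <| lift (fun m (x : R) => X.ρ (op x) m) (fun _ _ _ => map_add _ _ _)
    (fun _ _ _ => map_smul _ _ _) (fun m x x' => by simp)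
    (fun r m x => by simp [← Module.End.mul_apply, ← map_mul])
  inv := ModuleCat.ofHom (tmulRight _ (1 : R))
  hom_inv_id := by
    ext m x
    change tmul (X.ρ (op x) m) (1 : R) = tmul m x
    rw [act_tmul, smul_eq_mul, mul_one]
  inv_hom_id := by
    ext m
    change X.ρ (op 1) m = m
    simp

def isoMk {Y : BimodObj S R} (e : X.M ≅ Y.M)
    (comm : ∀ r, ModuleCat.ofHom (X.ρ r) ≫ e.hom = e.hom ≫ ModuleCat.ofHom (Y.ρ r)) : X ≅ Y where
  hom := ⟨e.hom, fun r x => congr($(comm r) x)⟩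
  inv := ⟨e.inv, fun r y => by
    have h : ModuleCat.ofHom (Y.ρ r) ≫ e.inv = e.inv ≫ ModuleCat.ofHom (X.ρ r) := by
      rw [Iso.comp_inv_eq, Category.assoc, comm, Iso.inv_hom_id_assoc]
    exact congr($h y)⟩
  hom_inv_id := BimodHom.ext e.hom_inv_id
  inv_hom_id := BimodHom.ext e.inv_hom_id

def tensorMap {Y : BimodObj S R} (g : X ⟶ Y) : X.tensorFunctor ⟶ Y.tensorFunctor where
  app N := ModuleCat.ofHom <| lift (fun m n => tmul (g.f m) n)
    (fun m m' n => by rw [map_add, add_tmul]) (fun s m n => by rw [map_smul, smul_tmul])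
    (fun _ _ _ => tmul_add ..) (fun r m n => by rw [← act_tmul, ← g.comm])

end BimodObj

open BimodObj
open ModuleCat (toSpanSingleton)

def wattsInverse : BimodObj S R ⥤ WattsDom S R where
  obj X := ⟨X.tensorFunctor, inferInstance⟩
  map g := ObjectProperty.homMk (tensorMap g)

def wattsComparison (L : ModuleCat.{u} R ⥤ ModuleCat.{u} S) (h : L.Additive) :
    (wattsObj S L h).tensorFunctor ⟶ L where
  app N := ModuleCat.ofHom <| lift (fun m n => L.map (toSpanSingleton n) m)
    (fun _ _ _ => map_add _ _ _) (fun _ _ _ => map_smul _ _ _)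
    (fun m n n' => by rw [ModuleCat.toSpanSingleton_add, L.map_add]; rfl)
    (fun r m n => by rw [← ModuleCat.rmulHom_comp_toSpanSingleton, L.map_comp]; rfl)
  naturality N N' g := by
    ext m n
    change L.map (toSpanSingleton (g n)) m = L.map g (L.map (toSpanSingleton n) m)
    rw [← ModuleCat.toSpanSingleton_comp, L.map_comp]
    rfl

instance (L : ModuleCat.{u} R ⥤ ModuleCat.{u} S) (h : L.Additive)
    [PreservesColimitsOfSize.{u, u} L] : IsIso (wattsComparison L h) := by
  have : IsIso ((wattsComparison L h).app (ModuleCat.of R R)) := by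
    rw [show (wattsComparison L h).app _ = (tensorSelfIso _).hom by ext; rfl]
    exact Iso.isIso_hom _
  exact ModuleCat.isIso_of_isIso_app_self _

noncomputable def wattsComparisonIso (L : WattsDom S R) (h : L.obj.Additive) :
    wattsInverse.obj (wattsObj S L.obj h) ≅ L := by
  have := L.property
  let e := asIso (wattsComparison L.obj h)
  exact ObjectProperty.isoMk _ e

theorem wattsDom_additive (L : WattsDom S R) : L.obj.Additive := by
  have := L.property
  exact L.obj.additive_of_preservesFiniteColimits

variable (hadd : ∀ L : WattsDom S R, L.obj.Additive)

noncomputable def wattsUnitIso : 𝟭 (WattsDom S R) ≅ wattsFunctor S hadd ⋙ wattsInverse :=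
  Iso.symm <| NatIso.ofComponents
    (fun L => wattsComparisonIso L (hadd L))
    (fun {L L'} ν => by
      refine ObjectProperty.hom_ext _ (NatTrans.ext (funext fun N => Tensor.hom_ext fun m n => ?_))
      change L'.obj.map (toSpanSingleton n) (ν.hom.app _ m) = ν.hom.app N (L.obj.map _ m)
      exact (congr($(ν.hom.naturality (toSpanSingleton n)) m)).symm)

def wattsCounitIso : wattsInverse ⋙ wattsFunctor S hadd ≅ 𝟭 (BimodObj S R) :=
  NatIso.ofComponents
    (fun X => isoMk (tensorSelfIso X) fun r => Tensor.hom_ext fun m x => by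
      change X.ρ (op (x * r.unop)) m = X.ρ r (X.ρ (op x) m)
      rw [MulOpposite.op_mul, op_unop, map_mul]
      rfl)
    (fun g => BimodHom.ext (Tensor.hom_ext fun m x => (g.comm _ m).symm))

noncomputable def wattsEquivalence : WattsDom S R ≌ BimodObj S R :=
  CategoryTheory.Equivalence.mk _ _ (wattsUnitIso hadd) (wattsCounitIso hadd)

/-- **generalized Eilenberg–Watts theorem.**  Let `R` and `S` be rings.  Every
colimit-preserving functor `L : ModuleCat R ⥤ ModuleCat S` is additive, and the functor
sending such an `L` to the `(S,R)`-bimodule `L(R)` — with right `R`-action in which `r` acts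
as `L` applied to right multiplication by `r` — is an equivalence from the full subcategory
of colimit-preserving functors `ModuleCat R ⥤ ModuleCat S` onto the category of
`(S,R)`-bimodules. -/
theorem stmt_5 (S R : Type u) [Ring S] [Ring R] :
    ∃ hadd : ∀ L : WattsDom S R, L.obj.Additive,
      (wattsFunctor S hadd).IsEquivalence :=
  ⟨wattsDom_additive, (wattsEquivalence wattsDom_additive).isEquivalence_functor⟩
end

section
/- Let T be a small category with finite products and C a cocomplete category. The full subcategory of the functor category T^op ⥤ C consisting of functors preserving finite coproducts is closed under all small colimits (computed pointwise in the functor category); in particular, the category Coalg(T, C) of internal T-coalgebras in C is cocomplete and its colimits are created by the inclusion into the functor category. -/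
/-! Colimits commute with colimits: a colimit in `D ⥤ C` is computed as `K.flip ⋙ colim`, and both
`K.flip` (pointwise) and `colim` (a left adjoint) preserve colimits. Hence finite-coproduct-preserving
functors are closed under colimits in `Tᵒᵖ ⥤ C`, and a full subcategory closed under colimits of an
ambient cocomplete category is cocomplete, with colimits created by the inclusion. -/

universe u u₂

open CategoryTheory Limits

section

variable {D : Type*} [Category* D] {C : Type*} [Category* C]

lemma preservesColimitsOfShape_colimit {I J : Type*} [Category* I] [Category* J]
    [HasColimitsOfShape J C] (K : J ⥤ D ⥤ C)
    (hK : ∀ j, PreservesColimitsOfShape I (K.obj j)) :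
    PreservesColimitsOfShape I (colimit K) := by
  have : PreservesColimitsOfShape I K.flip :=
    preservesColimitsOfShape_of_evaluation _ _ fun j =>
      preservesColimitsOfShape_of_natIso (flipCompEvaluation K j).symm
  exact preservesColimitsOfShape_of_natIso (colimitIsoFlipCompColim K).symm

lemma preservesFiniteCoproducts_colimit {J : Type*} [Category* J] [HasColimitsOfShape J C]
    (K : J ⥤ D ⥤ C) (hK : ∀ j, PreservesFiniteCoproducts (K.obj j)) :
    PreservesFiniteCoproducts (colimit K) :=
  ⟨fun n => preservesColimitsOfShape_colimit K fun j => (hK j).preserves n⟩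

instance : ObjectProperty.IsClosedUnderIsomorphisms
    (fun A : D ⥤ C => PreservesFiniteCoproducts A) where
  of_iso e _ := ⟨fun _ => preservesColimitsOfShape_of_natIso e⟩

instance (J : Type*) [Category* J] [HasColimitsOfShape J C] :
    ObjectProperty.IsClosedUnderColimitsOfShape
      (fun A : D ⥤ C => PreservesFiniteCoproducts A) J :=
  .mk' <| by
    rintro _ ⟨K, hK⟩
    exact preservesFiniteCoproducts_colimit K hK

end

theorem stmt_6_general (T : Type u) [SmallCategory T]
    (C : Type u₂) [Category.{u} C] [HasColimits C] :
    (∀ (J : Type u) [SmallCategory J] (K : J ⥤ (Tᵒᵖ ⥤ C)),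
      (∀ j, PreservesFiniteCoproducts (K.obj j)) →
        PreservesFiniteCoproducts (colimit K)) ∧
    HasColimits (ObjectProperty.FullSubcategory (fun A : Tᵒᵖ ⥤ C => PreservesFiniteCoproducts A)) ∧
    Nonempty (CreatesColimitsOfSize.{u, u}
      (ObjectProperty.ι (fun A : Tᵒᵖ ⥤ C => PreservesFiniteCoproducts A))) :=
  ⟨fun _ _ K hK => preservesFiniteCoproducts_colimit K hK,
    {}, ⟨{}⟩⟩

/-- Let `T` be a small category with finite products and `C` a cocomplete
category.  The full subcategory of `Tᵒᵖ ⥤ C` consisting of the finite-coproduct-preserving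
functors is closed under all small colimits (computed pointwise in the functor category): the
colimit of any small diagram of finite-coproduct-preserving functors again preserves finite
coproducts.  In particular the category `Coalg (T, C)` of internal `T`-coalgebras in `C` is
cocomplete, and its colimits are created by the inclusion into the functor category. -/
theorem stmt_6 (T : Type u) [SmallCategory T] [HasFiniteProducts T]
    (C : Type u₂) [Category.{u} C] [HasColimits C] :
    (∀ (J : Type u) [SmallCategory J] (K : J ⥤ (Tᵒᵖ ⥤ C)),
      (∀ j, PreservesFiniteCoproducts (K.obj j)) →
        PreservesFiniteCoproducts (colimit K)) ∧
    HasColimits (ObjectProperty.FullSubcategory (fun A : Tᵒᵖ ⥤ C => PreservesFiniteCoproducts A)) ∧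
    Nonempty (CreatesColimitsOfSize.{u, u}
      (ObjectProperty.ι (fun A : Tᵒᵖ ⥤ C => PreservesFiniteCoproducts A))) :=
  stmt_6_general T C
end

section
/- Let T be a small category with finite products. For every sifted small category J and every diagram D : J ⥤ (T ⥤ Type) such that each functor D(j) : T ⥤ Type preserves finite products, the colimit of D in the functor category T ⥤ Type also preserves finite products. That is, the category of T-algebras is closed under sifted colimits in the functor category T ⥤ Type. -/
universe u

open CategoryTheory Limits Opposite

/-!
Limits in a functor category are computed pointwise, so `colimit D ≅ D.flip ⋙ colim`. The
functor `D.flip : T ⥤ (J ⥤ Type u)` preserves finite products because every `D.obj j` does,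
and `colim : (J ⥤ Type u) ⥤ Type u` preserves finite products exactly because `J` is sifted.
-/

lemma CategoryTheory.Functor.preservesFiniteProducts_flip {J C D : Type*} [Category* J]
    [Category* C] [Category* D] [HasFiniteProducts D] (F : J ⥤ C ⥤ D)
    [∀ j, PreservesFiniteProducts (F.obj j)] : PreservesFiniteProducts F.flip where
  preserves _ := preservesLimitsOfShape_of_evaluation _ _ fun j =>
    preservesLimitsOfShape_of_natIso (flipCompEvaluation F j).symm

theorem stmt_12_general (T : Type u) [SmallCategory T]
    (J : Type u) [SmallCategory J] [IsSifted J] (D : J ⥤ (T ⥤ Type u))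
    (h : ∀ j, PreservesFiniteProducts (D.obj j)) :
    PreservesFiniteProducts (colimit D) := by
  have := D.preservesFiniteProducts_flip
  exact ⟨fun _ => preservesLimitsOfShape_of_natIso (colimitIsoFlipCompColim D).symm⟩

/-- Let `T` be a small category with finite products.  For every sifted
small category `J` and every diagram `D : J ⥤ (T ⥤ Type)` such that each `D.obj j` preserves
finite products, the colimit of `D` in the functor category `T ⥤ Type` also preserves finite
products.  That is, the category of `T`-algebras is closed under sifted colimits in the
functor category `T ⥤ Type`. -/
theorem stmt_12 (T : Type u) [SmallCategory T] [HasFiniteProducts T]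
    (J : Type u) [SmallCategory J] [IsSifted J] (D : J ⥤ (T ⥤ Type u))
    (h : ∀ j, PreservesFiniteProducts (D.obj j)) :
    PreservesFiniteProducts (colimit D) :=
  stmt_12_general T J D h
end

section
/- Fix n : ℕ. The functor from the category of commutative rings to the category of groups sending a commutative ring R to the general linear group GL(n, R) of invertible n × n matrices over R, and sending a ring homomorphism f : R → R' to the group homomorphism induced by applying f entrywise, has a left adjoint. -/
universe u

open CategoryTheory

/-- The general linear group functor `CommRingCat ⥤ Grp`, sending a commutative ring `R` to
`GL (Fin n) R` and a ring homomorphism to the group homomorphism obtained by applying it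
entrywise. -/
def GLFunctor (n : ℕ) : CommRingCat.{u} ⥤ GrpCat.{u} where
  obj R := GrpCat.of (Matrix.GeneralLinearGroup (Fin n) R)
  map f := GrpCat.ofHom (Matrix.GeneralLinearGroup.map f.hom)

/-!
A group homomorphism `G → GL_n(R)` is the same as a monoid homomorphism `G → M_n(R)`, that is,
a family of matrices `ρ g` with `ρ (g * h) = ρ g * ρ h` and `ρ 1 = 1`. Such families are
corepresented by the polynomial ring over `ℤ` in variables `x (g, i, j)` modulo the entries of
these matrix identities for the generic matrices `(x (g, i, j))ᵢⱼ`; this quotient ring is the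
value of the left adjoint at `G`.
-/

noncomputable section

def MonoidHom.toHomUnitsEquiv {G M : Type*} [Group G] [Monoid M] : (G →* M) ≃ (G →* Mˣ) where
  toFun := MonoidHom.toHomUnits
  invFun f := (Units.coeHom M).comp f
  left_inv _ := rfl
  right_inv _ := MonoidHom.ext fun _ => Units.ext rfl

open MvPolynomial

namespace MatrixRepRing

def genericMatrix (ι : Type*) {G : Type*} (g : G) : Matrix ι ι (MvPolynomial (G × ι × ι) ℤ) :=
  Matrix.of fun i j => X (g, i, j)

variable (ι G : Type*) [Fintype ι] [DecidableEq ι] [Monoid G]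

def relations : Ideal (MvPolynomial (G × ι × ι) ℤ) :=
  Ideal.span <|
    {p | ∃ (g h : G) (i j : ι),
      p = (genericMatrix ι (g * h) - genericMatrix ι g * genericMatrix ι h) i j} ∪
    {p | ∃ i j : ι, p = (genericMatrix ι (1 : G) - 1) i j}

end MatrixRepRing

abbrev MatrixRepRing (ι G : Type*) [Fintype ι] [DecidableEq ι] [Monoid G] : Type _ :=
  MvPolynomial (G × ι × ι) ℤ ⧸ MatrixRepRing.relations ι G

namespace MatrixRepRing

variable {ι G : Type*} [Fintype ι] [DecidableEq ι] [Monoid G] {R : Type*} [CommRing R]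

lemma mapMatrix_mk_genericMatrix_mul (g h : G) :
    (Ideal.Quotient.mk (relations ι G)).mapMatrix (genericMatrix ι (g * h)) =
      (Ideal.Quotient.mk (relations ι G)).mapMatrix (genericMatrix ι g * genericMatrix ι h) := by
  ext i j
  refine Ideal.Quotient.eq.2 (Ideal.subset_span (Or.inl ⟨g, h, i, j, ?_⟩))
  simp [Matrix.sub_apply]

lemma mapMatrix_mk_genericMatrix_one :
    (Ideal.Quotient.mk (relations ι G)).mapMatrix (genericMatrix ι (1 : G)) = 1 := by
  ext i j
  rw [← map_one (Ideal.Quotient.mk (relations ι G)).mapMatrix]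
  refine Ideal.Quotient.eq.2 (Ideal.subset_span (Or.inr ⟨i, j, ?_⟩))
  simp [Matrix.sub_apply]

variable (ι G) in
def univRep : G →* Matrix ι ι (MatrixRepRing ι G) where
  toFun g := (Ideal.Quotient.mk (relations ι G)).mapMatrix (genericMatrix ι g)
  map_one' := mapMatrix_mk_genericMatrix_one
  map_mul' g h := by rw [mapMatrix_mk_genericMatrix_mul, map_mul]

def evalRep (ρ : G →* Matrix ι ι R) : MvPolynomial (G × ι × ι) ℤ →+* R :=
  eval₂Hom (Int.castRingHom R) fun x => ρ x.1 x.2.1 x.2.2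

lemma mapMatrix_evalRep_genericMatrix (ρ : G →* Matrix ι ι R) (g : G) :
    (evalRep ρ).mapMatrix (genericMatrix ι g) = ρ g := by
  ext i j
  simp [evalRep, genericMatrix]

lemma relations_le_ker_evalRep (ρ : G →* Matrix ι ι R) :
    relations ι G ≤ RingHom.ker (evalRep ρ) := by
  refine Ideal.span_le.2 ?_
  rintro p (⟨g, h, i, j, rfl⟩ | ⟨i, j, rfl⟩) <;> rw [SetLike.mem_coe, RingHom.mem_ker]
  · change (evalRep ρ).mapMatrix
      (genericMatrix ι (g * h) - genericMatrix ι g * genericMatrix ι h) i j = 0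
    simp only [map_sub, map_mul, mapMatrix_evalRep_genericMatrix, sub_self, Matrix.zero_apply]
  · change (evalRep ρ).mapMatrix (genericMatrix ι (1 : G) - 1) i j = 0
    simp only [map_sub, map_one, mapMatrix_evalRep_genericMatrix, sub_self, Matrix.zero_apply]

def lift (ρ : G →* Matrix ι ι R) : MatrixRepRing ι G →+* R :=
  Ideal.Quotient.lift _ (evalRep ρ) (relations_le_ker_evalRep ρ)

lemma mapMatrix_lift_univRep (ρ : G →* Matrix ι ι R) (g : G) :
    (lift ρ).mapMatrix (univRep ι G g) = ρ g := by
  ext i j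
  simp [lift, univRep, genericMatrix, evalRep]

lemma ringHom_ext {f₁ f₂ : MatrixRepRing ι G →+* R}
    (h : ∀ g, f₁.mapMatrix (univRep ι G g) = f₂.mapMatrix (univRep ι G g)) : f₁ = f₂ := by
  refine Ideal.Quotient.ringHom_ext (MvPolynomial.ringHom_ext (fun r => ?_) fun ⟨g, i, j⟩ => ?_)
  · simp only [eq_intCast, map_intCast]
  · simpa [univRep, genericMatrix] using congr($(h g) i j)

variable (ι G R) in
def homEquiv : (MatrixRepRing ι G →+* R) ≃ (G →* Matrix ι ι R) where
  toFun f := f.mapMatrix.toMonoidHom.comp (univRep ι G)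
  invFun := lift
  left_inv _ := ringHom_ext (mapMatrix_lift_univRep _)
  right_inv ρ := MonoidHom.ext (mapMatrix_lift_univRep ρ)

end MatrixRepRing

open Opposite in
def GLFunctor.corepresentableBy (n : ℕ) (A : GrpCat.{u}) :
    (GLFunctor.{u} n ⋙ coyoneda.obj (op A)).CorepresentableBy
      (CommRingCat.of (MatrixRepRing (Fin n) A)) where
  homEquiv {R} := ConcreteCategory.homEquiv.trans <| (MatrixRepRing.homEquiv _ _ R).trans <|
    MonoidHom.toHomUnitsEquiv.trans
      (ConcreteCategory.homEquiv (X := A) (Y := (GLFunctor n).obj R)).symm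
  homEquiv_comp _ _ := rfl

end

/-- For each `n : ℕ`, the functor from commutative rings to groups sending
`R` to the general linear group `GL (Fin n) R` (with entrywise functoriality) has a left
adjoint. -/
theorem stmt_16 (n : ℕ) : (GLFunctor.{u} n).IsRightAdjoint :=
  Functor.isRightAdjoint_of_leftAdjointObjIsDefined_eq_top <| funext fun A =>
    eq_true (GLFunctor.corepresentableBy n A).isCorepresentable
end
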